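/- Second moment of the one-step likelihood ratio: for every state x ∈ ℕ^d and every admissible control δ ∈ A_x, the expectation of L(x,δ,p)² when p is distributed according to the product Poisson distribution Poi((δ_j·Δt)_{j=1}^J) equals exp(Δt · Σ_{j=1}^J (a_j(x) − δ_j)²/δ_j), where the summand (a_j(x) − δ_j)²/δ_j is taken to be 0 for indices j with a_j(x) = δ_j = 0. -/

import Mathlib

noncomputable section

open scoped BigOperators ENNReal
open Real

/-- Admissible control set at state `x`: `δ_j = 0` exactly when `a_j(x) = 0`, and
`δ_j > 0` otherwise. -/
def Adm {d J : ℕ} (a : Fin J → (Fin d → ℕ) → ℝ) (x : Fin d → ℕ) (δ : Fin J → ℝ) : Prop :=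
  ∀ j, (a j x = 0 → δ j = 0) ∧ (a j x ≠ 0 → 0 < δ j)

/-- Probability mass at `p` of the product Poisson distribution on `ℕ^J` with rate
vector `r`: `∏ j, e^{-r_j} r_j^{p_j} / p_j!` (with `0^0 = 1`). -/
def poiProb {J : ℕ} (r : Fin J → ℝ) (p : Fin J → ℕ) : ℝ :=
  ∏ j, Real.exp (-(r j)) * (r j) ^ (p j) / ((p j).factorial : ℝ)

/-- One-step likelihood ratio
`L(x,δ,p) = ∏_j e^{-(a_j(x) - δ_j) Δt} (a_j(x)/δ_j)^{p_j}`,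
with the convention `(a_j(x)/δ_j)^{p_j} := 1` when `a_j(x) = δ_j = 0`. -/
def lik {d J : ℕ} (a : Fin J → (Fin d → ℕ) → ℝ) (Δt : ℝ) (x : Fin d → ℕ)
    (δ : Fin J → ℝ) (p : Fin J → ℕ) : ℝ :=
  ∏ j, Real.exp (-(a j x - δ j) * Δt) *
    (if a j x = 0 ∧ δ j = 0 then 1 else (a j x / δ j) ^ (p j))

/-- **Second moment of the one-step likelihood ratio.**
For every state `x` and admissible control `δ ∈ A_x`, the expectation of `L(x,δ,p)²`
under `p ∼ Poi((δ_j Δt)_j)` equals `exp(Δt ∑_j (a_j(x) − δ_j)²/δ_j)`, where the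
summand `(a_j(x) − δ_j)²/δ_j` is taken to be `0` for indices `j` with
`a_j(x) = δ_j = 0` (which is Lean's value of `0/0` anyway). -/

lemma exp_tsum_aux (x : ℝ) : Real.exp x = ∑' n : ℕ, x ^ n / n.factorial := by
  rw [Real.exp_eq_exp_ℝ, NormedSpace.exp_eq_tsum ℝ]
  simp [div_eq_inv_mul, smul_eq_mul]

lemma tsum_pi_prod_aux : ∀ {J : ℕ} (f : Fin J → ℕ → ℝ≥0∞),
    (∑' p : Fin J → ℕ, ∏ j, f j (p j)) = ∏ j, ∑' n, f j n := by
  intro J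
  induction J with
  | zero =>
    intro f
    rw [tsum_eq_single (fun _ => 0)]
    · simp
    · intro b hb; exact absurd (funext fun i => i.elim0) hb
  | succ n ih =>
    intro f
    rw [← (Fin.consEquiv (fun _ : Fin (n+1) => ℕ)).tsum_eq]
    simp only [Fin.consEquiv_apply, Fin.prod_univ_succ, Fin.cons_zero, Fin.cons_succ]
    rw [ENNReal.tsum_prod']
    simp_rw [ENNReal.tsum_mul_left, ih fun j => f j.succ, ENNReal.tsum_mul_right]

lemma key_aux (A d t : ℝ) (hA : 0 < A) (hd : 0 < d) (ht : 0 < t) :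
    (∑' n : ℕ, ENNReal.ofReal (Real.exp (-(d * t)) * (d * t) ^ n / n.factorial) *
      ENNReal.ofReal ((Real.exp (-(A - d) * t) * (A / d) ^ n) ^ 2))
    = ENNReal.ofReal (Real.exp (t * ((A - d) ^ 2 / d))) := by
  have hnn : ∀ n : ℕ, 0 ≤ Real.exp (-(d * t)) * (d * t) ^ n / n.factorial := fun n => by
    positivity
  have h1 : ∀ n : ℕ, Real.exp (-(d*t)) * (d*t)^n / n.factorial * (Real.exp (-(A-d)*t) * (A/d)^n)^2
      = (Real.exp (-(d*t)) * Real.exp (-(A-d)*t)^2) * ((d*t*(A/d)^2)^n / n.factorial) := by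
    intro n
    rw [show (d*t*(A/d)^2)^n = (d*t)^n * ((A/d)^2)^n from mul_pow _ _ _, ← pow_right_comm]
    ring
  simp_rw [← ENNReal.ofReal_mul (hnn _), h1]
  have hg : ∀ n : ℕ, 0 ≤ (Real.exp (-(d*t)) * Real.exp (-(A-d)*t)^2) * ((d*t*(A/d)^2)^n / n.factorial) := by
    intro n; positivity
  have hs : Summable fun n : ℕ => (Real.exp (-(d*t)) * Real.exp (-(A-d)*t)^2) * ((d*t*(A/d)^2)^n / n.factorial) :=
    (Real.summable_pow_div_factorial _).mul_left _
  rw [← ENNReal.ofReal_tsum_of_nonneg hg hs, tsum_mul_left, ← exp_tsum_aux]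
  congr 1
  rw [sq (Real.exp _), ← Real.exp_add, ← Real.exp_add, ← Real.exp_add]
  congr 1
  field_simp
  ring

theorem second_moment_one_step_likelihood
    {d J : ℕ} (a : Fin J → (Fin d → ℕ) → ℝ) (ha : ∀ j x, 0 ≤ a j x)
    (Δt : ℝ) (hΔt : 0 < Δt)
    (x : Fin d → ℕ) (δ : Fin J → ℝ) (hδ : Adm a x δ) :
    (∑' p : Fin J → ℕ,
        ENNReal.ofReal (poiProb (fun j => δ j * Δt) p) *
          ENNReal.ofReal ((lik a Δt x δ p) ^ 2))
      =
    ENNReal.ofReal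
      (Real.exp (Δt * ∑ j,
        if a j x = 0 ∧ δ j = 0 then 0 else (a j x - δ j) ^ 2 / δ j)) := by
  classical
  have hδ0 : ∀ j, 0 ≤ δ j := fun j => by
    by_cases h : a j x = 0
    · exact le_of_eq ((hδ j).1 h).symm
    · exact ((hδ j).2 h).le
  have hstep : ∀ p : Fin J → ℕ,
      ENNReal.ofReal (poiProb (fun j => δ j * Δt) p) *
        ENNReal.ofReal ((lik a Δt x δ p) ^ 2)
      = ∏ j, (ENNReal.ofReal (Real.exp (-(δ j * Δt)) * (δ j * Δt) ^ (p j) / ((p j).factorial : ℝ)) *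
          ENNReal.ofReal ((Real.exp (-(a j x - δ j) * Δt) *
            (if a j x = 0 ∧ δ j = 0 then 1 else (a j x / δ j) ^ (p j))) ^ 2)) := by
    intro p
    unfold poiProb lik
    rw [← Finset.prod_pow,
      ENNReal.ofReal_prod_of_nonneg (fun j _ => by
        refine div_nonneg (mul_nonneg (Real.exp_pos _).le (pow_nonneg (mul_nonneg (hδ0 j) hΔt.le) _)) (Nat.cast_nonneg _)),
      ENNReal.ofReal_prod_of_nonneg (fun j _ => sq_nonneg _),
      ← Finset.prod_mul_distrib]
  simp_rw [hstep]
  rw [tsum_pi_prod_aux (fun j n => ENNReal.ofReal (Real.exp (-(δ j * Δt)) * (δ j * Δt) ^ n / (n.factorial : ℝ)) *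
      ENNReal.ofReal ((Real.exp (-(a j x - δ j) * Δt) *
        (if a j x = 0 ∧ δ j = 0 then 1 else (a j x / δ j) ^ n)) ^ 2)), Finset.mul_sum, Real.exp_sum,
    ENNReal.ofReal_prod_of_nonneg (fun j _ => (Real.exp_pos _).le)]
  refine Finset.prod_congr rfl fun j _ => ?_
  by_cases h : a j x = 0
  · have hd0 : δ j = 0 := (hδ j).1 h
    simp only [h, hd0, and_self, eq_self_iff_true, if_true, ite_true, zero_mul, neg_zero,
      sub_zero, Real.exp_zero, mul_zero, mul_one, one_mul, one_pow, ENNReal.ofReal_one]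
    rw [tsum_eq_single 0]
    · simp
    · intro n hn
      simp [zero_pow hn]
  · have hd : 0 < δ j := (hδ j).2 h
    have hA : 0 < a j x := lt_of_le_of_ne (ha j x) (Ne.symm h)
    have hcond : ¬ (a j x = 0 ∧ δ j = 0) := fun hc => h hc.1
    simp only [if_neg hcond]
    exact key_aux _ _ _ hA hd hΔt
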